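/- Under Assumption A and for every γ ∈ (0, min{γ_g, 1/(L_f + L_h)}), the function φ = f + g + h is level-bounded (i.e., for every α ∈ ℝ the sublevel set {x ∈ ℝ^d : φ(x) ≤ α} is bounded) if and only if the Davis–Yin envelope φ_γ^DY is level-bounded. -/

import Mathlib

/-! Taking `y = x` in the infimum gives `φ_γ^DY ≤ φ`, hence one direction. Conversely, the descent
lemma for `f` and `h` bounds the model minimised in `φ_γ^DY x` from below by `φ y + c ‖y - x‖²`
with `c = 1/(2γ) - (L_f + L_h)/2 > 0`. So a point `x` with `φ_γ^DY x ≤ α` has some `y` with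
`φ y ≤ α + 1` and `c ‖y - x‖² ≤ α + 1 - min φ`: it lies in a fixed thickening of a bounded
sublevel set of `φ`. -/

open scoped RealInnerProductSpace

/-- The Davis–Yin envelope `φ_γ^DY`. -/
noncomputable def dyEnv {E : Type*} [NormedAddCommGroup E] [InnerProductSpace ℝ E]
    [CompleteSpace E] (f h : E → ℝ) (g : E → EReal) (γ : ℝ) (x : E) : EReal :=
  ⨅ y : E, (((f x + ⟪gradient f x, y - x⟫ + h x + ⟪gradient h x, y - x⟫
      + 1 / (2 * γ) * ‖y - x‖ ^ 2 : ℝ) : EReal) + g y)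

theorem le_add_inner_gradient_add_sq {E : Type*} [NormedAddCommGroup E] [InnerProductSpace ℝ E]
    [CompleteSpace E] {f : E → ℝ} {L : ℝ} (hfd : Differentiable ℝ f)
    (hlip : ∀ x y : E, ‖gradient f x - gradient f y‖ ≤ L * ‖x - y‖) (x y : E) :
    f y ≤ f x + ⟪gradient f x, y - x⟫ + L / 2 * ‖y - x‖ ^ 2 := by
  set v := y - x
  -- `f` along the segment minus its quadratic model; the claim is `u 1 ≤ u 0`.
  set u : ℝ → ℝ := fun t => f (x + t • v) - t * ⟪gradient f x, v⟫ - L / 2 * t ^ 2 * ‖v‖ ^ 2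
  have hu : ∀ t, HasDerivAt u
      (⟪gradient f (x + t • v), v⟫ - ⟪gradient f x, v⟫ - L * t * ‖v‖ ^ 2) t := by
    intro t
    have hline : HasDerivAt (fun t : ℝ => x + t • v) v t := by
      simpa using ((hasDerivAt_id t).smul_const v).const_add x
    have hf := (hfd _).hasGradientAt.hasFDerivAt.comp_hasDerivAt t hline
    rw [InnerProductSpace.toDual_apply_apply] at hf
    refine ((hf.sub ((hasDerivAt_id t).mul_const ⟪gradient f x, v⟫)).sub
      (((hasDerivAt_pow 2 t).const_mul (L / 2)).mul_const (‖v‖ ^ 2))).congr_deriv ?_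
    simp only [Nat.cast_ofNat, Nat.add_one_sub_one, pow_one]
    ring
  have hu' : ∀ t, 0 ≤ t → ⟪gradient f (x + t • v), v⟫ - ⟪gradient f x, v⟫ ≤ L * t * ‖v‖ ^ 2 := by
    intro t ht
    calc ⟪gradient f (x + t • v), v⟫ - ⟪gradient f x, v⟫
        = ⟪gradient f (x + t • v) - gradient f x, v⟫ := (inner_sub_left _ _ _).symm
      _ ≤ ‖gradient f (x + t • v) - gradient f x‖ * ‖v‖ := real_inner_le_norm _ _
      _ ≤ L * ‖x + t • v - x‖ * ‖v‖ := by gcongr; exact hlip _ _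
      _ = L * t * ‖v‖ ^ 2 := by
        rw [add_sub_cancel_left, norm_smul, Real.norm_of_nonneg ht]; ring
  have hanti : AntitoneOn u (Set.Ici 0) :=
    antitoneOn_of_hasDerivWithinAt_nonpos (convex_Ici 0)
      (fun t _ => (hu t).continuousAt.continuousWithinAt)
      (fun t _ => (hu t).hasDerivWithinAt)
      (fun t ht => sub_nonpos.2 (hu' t (le_of_lt (by simpa using ht))))
  have h01 : u 1 ≤ u 0 := hanti Set.self_mem_Ici (Set.mem_Ici.2 zero_le_one) zero_le_one
  simp only [u, v, one_smul, zero_smul, add_zero, add_sub_cancel, one_mul, one_pow, zero_mul,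
    sub_zero, ne_eq, OfNat.ofNat_ne_zero, not_false_eq_true, zero_pow, mul_zero] at h01
  linarith

theorem Bornology.IsBounded.sublevel_iInf_add_mul_dist_sq {X : Type*} [PseudoMetricSpace X]
    {φ : X → EReal} {m c α : ℝ} (hc : 0 < c) (hm : ∀ y, (m : EReal) ≤ φ y)
    (hφ : Bornology.IsBounded {y | φ y ≤ ((α + 1 : ℝ) : EReal)}) :
    Bornology.IsBounded {x | ⨅ y, φ y + ((c * dist y x ^ 2 : ℝ) : EReal) ≤ (α : EReal)} := by
  refine (hφ.cthickening (δ := √((α + 1 - m) / c))).subset fun x hx => ?_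
  obtain ⟨y, hy⟩ := iInf_lt_iff.1 (hx.trans_lt (EReal.coe_lt_coe_iff.2 (lt_add_one α)))
  have hsq : 0 ≤ c * dist y x ^ 2 := by positivity
  refine Metric.mem_cthickening_of_dist_le x y _ _ ?_ ?_
  · exact (le_add_of_nonneg_right (EReal.coe_nonneg.2 hsq)).trans hy.le
  · have hmy : m + c * dist y x ^ 2 < α + 1 := by
      rw [← EReal.coe_lt_coe_iff, EReal.coe_add]
      exact (add_le_add_left (hm y) _).trans_lt hy
    refine Real.le_sqrt_of_sq_le ?_
    rw [dist_comm, le_div_iff₀ hc]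
    linarith

section DavisYin

variable {E : Type*} [NormedAddCommGroup E] [InnerProductSpace ℝ E] [CompleteSpace E]

theorem dyEnv_le_self (f h : E → ℝ) (g : E → EReal) (γ : ℝ) (x : E) :
    dyEnv f h g γ x ≤ (f x : EReal) + g x + (h x : EReal) :=
  calc dyEnv f h g γ x
      ≤ ((f x + ⟪gradient f x, x - x⟫ + h x + ⟪gradient h x, x - x⟫
          + 1 / (2 * γ) * ‖x - x‖ ^ 2 : ℝ) : EReal) + g x := iInf_le _ x
    _ = (f x : EReal) + g x + (h x : EReal) := by
      simp only [sub_self, inner_zero_right, add_zero, norm_zero, ne_eq, OfNat.ofNat_ne_zero,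
        not_false_eq_true, zero_pow, mul_zero, EReal.coe_add]
      exact add_right_comm _ _ _

theorem iInf_add_mul_dist_sq_le_dyEnv {f h : E → ℝ} {g : E → EReal} {Lf Lh : ℝ}
    (hfd : Differentiable ℝ f) (hflip : ∀ x y : E, ‖gradient f x - gradient f y‖ ≤ Lf * ‖x - y‖)
    (hhd : Differentiable ℝ h) (hhlip : ∀ x y : E, ‖gradient h x - gradient h y‖ ≤ Lh * ‖x - y‖)
    (γ : ℝ) (x : E) :
    ⨅ y, (f y : EReal) + g y + (h y : EReal)
        + (((1 / (2 * γ) - (Lf + Lh) / 2) * dist y x ^ 2 : ℝ) : EReal) ≤ dyEnv f h g γ x := by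
  refine iInf_mono fun y => ?_
  have hf := le_add_inner_gradient_add_sq hfd hflip x y
  have hh := le_add_inner_gradient_add_sq hhd hhlip x y
  have hmodel : f y + h y + (1 / (2 * γ) - (Lf + Lh) / 2) * dist y x ^ 2
      ≤ f x + ⟪gradient f x, y - x⟫ + h x + ⟪gradient h x, y - x⟫
        + 1 / (2 * γ) * ‖y - x‖ ^ 2 := by
    rw [dist_eq_norm]
    linarith
  calc (f y : EReal) + g y + (h y : EReal)
        + (((1 / (2 * γ) - (Lf + Lh) / 2) * dist y x ^ 2 : ℝ) : EReal)
      = ((f y + h y + (1 / (2 * γ) - (Lf + Lh) / 2) * dist y x ^ 2 : ℝ) : EReal) + g y := by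
        simp only [EReal.coe_add]
        ac_rfl
    _ ≤ _ := add_le_add_left (EReal.coe_le_coe_iff.2 hmodel) _

end DavisYin

theorem dyEnv_levelBounded_iff_general
    {E : Type*} [NormedAddCommGroup E] [InnerProductSpace ℝ E] [FiniteDimensional ℝ E]
    (f h : E → ℝ) (g : E → EReal) (Lf Lh : ℝ)
    (hfd : Differentiable ℝ f)
    (hflip : ∀ x y : E, ‖gradient f x - gradient f y‖ ≤ Lf * ‖x - y‖)
    (hhd : Differentiable ℝ h)
    (hhlip : ∀ x y : E, ‖gradient h x - gradient h y‖ ≤ Lh * ‖x - y‖)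
    (hgtop : ∃ x, g x ≠ ⊤) (hgbot : ∀ x, g x ≠ ⊥)
    (hattain : ∃ xs : E, ∀ x : E,
      (f xs : EReal) + g xs + (h xs : EReal) ≤ (f x : EReal) + g x + (h x : EReal))
    (γ : ℝ) (hγ0 : 0 < γ) (hγ2 : γ * (Lf + Lh) < 1) :
    (∀ α : ℝ, Bornology.IsBounded
        {x : E | (f x : EReal) + g x + (h x : EReal) ≤ (α : EReal)}) ↔
      (∀ α : ℝ, Bornology.IsBounded {x : E | dyEnv f h g γ x ≤ (α : EReal)}) := by
  obtain ⟨xs, hxs⟩ := hattain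
  obtain ⟨x₀, hx₀⟩ := hgtop
  have hmin_ne_top : (f xs : EReal) + g xs + (h xs : EReal) ≠ ⊤ :=
    ne_top_of_le_ne_top (EReal.add_ne_top (EReal.add_ne_top (EReal.coe_ne_top _) hx₀)
      (EReal.coe_ne_top _)) (hxs x₀)
  have hmin_ne_bot : (f xs : EReal) + g xs + (h xs : EReal) ≠ ⊥ :=
    EReal.add_ne_bot_iff.2 ⟨EReal.add_ne_bot_iff.2 ⟨EReal.coe_ne_bot _, hgbot xs⟩,
      EReal.coe_ne_bot _⟩
  have hm := EReal.coe_toReal hmin_ne_top hmin_ne_bot ▸ hxs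
  have hc : 0 < 1 / (2 * γ) - (Lf + Lh) / 2 := by
    rw [show 1 / (2 * γ) - (Lf + Lh) / 2 = (1 - γ * (Lf + Lh)) / (2 * γ) by field_simp]
    exact div_pos (by linarith) (by positivity)
  constructor
  · intro H α
    exact ((H (α + 1)).sublevel_iInf_add_mul_dist_sq hc hm).subset
      fun x hx => (iInf_add_mul_dist_sq_le_dyEnv hfd hflip hhd hhlip γ x).trans hx
  · intro H α
    exact (H α).subset fun x hx => (dyEnv_le_self f h g γ x).trans hx

theorem dyEnv_levelBounded_iff
    {E : Type*} [NormedAddCommGroup E] [InnerProductSpace ℝ E] [FiniteDimensional ℝ E]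
    (f h : E → ℝ) (g : E → EReal) (Lf Lh γg : ℝ)
    (hLf : 0 ≤ Lf) (hLh : 0 ≤ Lh)
    (hfd : Differentiable ℝ f)
    (hflip : ∀ x y : E, ‖gradient f x - gradient f y‖ ≤ Lf * ‖x - y‖)
    (hhd : Differentiable ℝ h)
    (hhlip : ∀ x y : E, ‖gradient h x - gradient h y‖ ≤ Lh * ‖x - y‖)
    (hγg : 0 < γg)
    (hgtop : ∃ x, g x ≠ ⊤) (hgbot : ∀ x, g x ≠ ⊥)
    (hglsc : LowerSemicontinuous g)
    (hpb : ∀ γ : ℝ, 0 < γ → γ < γg → ∀ w : E,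
      ⊥ < ⨅ y : E, (g y + ((1 / (2 * γ) * ‖y - w‖ ^ 2 : ℝ) : EReal)))
    (hattain : ∃ xs : E, ∀ x : E,
      (f xs : EReal) + g xs + (h xs : EReal) ≤ (f x : EReal) + g x + (h x : EReal))
    (γ : ℝ) (hγ0 : 0 < γ) (hγ1 : γ < γg) (hγ2 : γ * (Lf + Lh) < 1) :
    (∀ α : ℝ, Bornology.IsBounded
        {x : E | (f x : EReal) + g x + (h x : EReal) ≤ (α : EReal)}) ↔
      (∀ α : ℝ, Bornology.IsBounded {x : E | dyEnv f h g γ x ≤ (α : EReal)}) :=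
  dyEnv_levelBounded_iff_general f h g Lf Lh hfd hflip hhd hhlip hgtop hgbot hattain γ hγ0 hγ2
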